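/- arXiv:1303.1674 — 6 statements merged into one kernel-verified Lean document; each statement's English description precedes it below -/
import Mathlib

section
/- For all indices i ≠ j, the Lauricella F_A operators commute: ℓ_i^A ∘ ℓ_j^A = ℓ_j^A ∘ ℓ_i^A as ℂ-linear endomorphisms of ℂ[x_1,…,x_m]. (This is the commutator computation [ℓ_i^A, ℓ_j^A] = 0 used to prove that {ℓ_1^A,…,ℓ_m^A} is a Gröbner basis.) -/
open MvPolynomial

/-- The Euler operator `θ_i = x_i ∂_i` as a ℂ-linear endomorphism of `ℂ[x_1,…,x_m]`. -/
noncomputable def eulerOp {m : ℕ} (i : Fin m) :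
    Module.End ℂ (MvPolynomial (Fin m) ℂ) :=
  (LinearMap.mulLeft ℂ (X i)) ∘ₗ (pderiv i).toLinearMap

/-- Multiplication by `x_i` as a ℂ-linear endomorphism of `ℂ[x_1,…,x_m]`. -/
noncomputable def xMulOp {m : ℕ} (i : Fin m) :
    Module.End ℂ (MvPolynomial (Fin m) ℂ) :=
  LinearMap.mulLeft ℂ (X i)

/-- The Lauricella `F_A` operator `ℓ_i^A = θ_i(θ_i + c_i − 1) − x_i(θ_1 + ⋯ + θ_m + a)(θ_i + b_i)`. -/
noncomputable def ellA {m : ℕ} (a : ℂ) (b c : Fin m → ℂ) (i : Fin m) :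
    Module.End ℂ (MvPolynomial (Fin m) ℂ) :=
  eulerOp i * (eulerOp i + (c i - 1) • 1) -
    xMulOp i * ((∑ j, eulerOp j) + a • 1) * (eulerOp i + b i • 1)

lemma pderiv_comm' {σ R : Type*} [CommRing R] [DecidableEq σ] (i j : σ) (p : MvPolynomial σ R) :
    pderiv i (pderiv j p) = pderiv j (pderiv i p) := by
  induction p using MvPolynomial.induction_on with
  | C a => simp
  | add p q hp hq => simp [hp, hq]
  | mul_X p k hp => simp [pderiv_mul, hp, Pi.single_apply, apply_ite (pderiv i), apply_ite (pderiv j)]; ring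

lemma eulerOp_apply {m : ℕ} (i : Fin m) (p : MvPolynomial (Fin m) ℂ) :
    eulerOp i p = X i * pderiv i p := rfl

lemma xMulOp_apply {m : ℕ} (i : Fin m) (p : MvPolynomial (Fin m) ℂ) :
    xMulOp i p = X i * p := rfl

lemma euler_comm {m : ℕ} (i j : Fin m) : Commute (eulerOp i) (eulerOp j) := by
  rcases eq_or_ne i j with rfl | h
  · exact Commute.refl _
  · apply LinearMap.ext; intro p
    simp only [Module.End.mul_apply, eulerOp_apply, pderiv_mul,
      pderiv_X_of_ne h, pderiv_X_of_ne h.symm, zero_mul, mul_zero, add_zero, zero_add,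
      pderiv_comm' i j]
    ring

lemma xMul_euler_comm {m : ℕ} {i j : Fin m} (h : i ≠ j) :
    Commute (xMulOp i) (eulerOp j) := by
  apply LinearMap.ext; intro p
  simp only [Module.End.mul_apply, eulerOp_apply, xMulOp_apply, pderiv_mul,
    pderiv_X_of_ne h, mul_zero, add_zero, zero_add, zero_mul]
  ring

lemma xMul_comm {m : ℕ} (i j : Fin m) : Commute (xMulOp i) (xMulOp j) := by
  apply LinearMap.ext; intro p
  simp only [Module.End.mul_apply, xMulOp_apply]
  ring

lemma euler_xMul_self {m : ℕ} (i : Fin m) :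
    eulerOp i * xMulOp i = xMulOp i * eulerOp i + xMulOp i := by
  apply LinearMap.ext; intro p
  simp only [Module.End.mul_apply, LinearMap.add_apply, eulerOp_apply, xMulOp_apply,
    pderiv_mul, pderiv_X_self, mul_one]
  ring

lemma euler_xMul {m : ℕ} (j i : Fin m) :
    eulerOp j * xMulOp i = xMulOp i * eulerOp j + (if j = i then xMulOp i else 0) := by
  rcases eq_or_ne j i with rfl | h
  · simpa using euler_xMul_self j
  · simp [h, ((xMul_euler_comm h.symm).symm).eq]

lemma central_smul {m : ℕ} (r : ℂ) (z : Module.End ℂ (MvPolynomial (Fin m) ℂ)) :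
    Commute (r • (1 : Module.End ℂ (MvPolynomial (Fin m) ℂ))) z :=
  (Commute.one_left z).smul_left r

lemma abstract_comm {R : Type*} [Ring R] (Ei Ej Xi Xj T ci cj bi bj : R)
    (hci : ∀ z, Commute ci z) (hcj : ∀ z, Commute cj z)
    (hbi : ∀ z, Commute bi z) (hbj : ∀ z, Commute bj z)
    (hEE : Commute Ei Ej)
    (hEiT : Commute Ei T) (hEjT : Commute Ej T)
    (hXiEj : Commute Xi Ej) (hXjEi : Commute Xj Ei)
    (hXX : Commute Xi Xj)
    (hTXi : T * Xi = Xi * (T + 1)) (hTXj : T * Xj = Xj * (T + 1)) :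
    (Ei * (Ei + ci) - Xi * T * (Ei + bi)) * (Ej * (Ej + cj) - Xj * T * (Ej + bj)) =
    (Ej * (Ej + cj) - Xj * T * (Ej + bj)) * (Ei * (Ei + ci) - Xi * T * (Ei + bi)) := by
  set A := Ei * (Ei + ci) with hA
  set B := Xi * T * (Ei + bi) with hB
  set C := Ej * (Ej + cj) with hC
  set D := Xj * T * (Ej + bj) with hD
  have hEiC : Commute Ei C := hEE.mul_right (hEE.add_right (hcj Ei).symm)
  have hEjA : Commute Ej A := hEE.symm.mul_right (hEE.symm.add_right (hci Ej).symm)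
  have hAC : C * A = A * C :=
    ((hEiC.mul_left ((hEiC.add_left (hci C)))).symm).eq
  have hEiD : Commute Ei D :=
    (hXjEi.symm.mul_right hEiT).mul_right (hEE.add_right (hbj Ei).symm)
  have hAD : D * A = A * D := ((hEiD.mul_left (hEiD.add_left (hci D))).symm).eq
  have hEjB : Commute Ej B :=
    (hXiEj.symm.mul_right hEjT).mul_right (hEE.symm.add_right (hbi Ej).symm)
  have hBC : C * B = B * C := (hEjB.mul_left (hEjB.add_left (hcj B))).eq
  -- the hard one
  have h1 : (Ei + bi) * Xj = Xj * (Ei + bi) := ((hXjEi.add_right (hbi Xj).symm).symm).eq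
  have h1' : (Ej + bj) * Xi = Xi * (Ej + bj) := ((hXiEj.add_right (hbj Xi).symm).symm).eq
  have h2 : (Ei + bi) * T = T * (Ei + bi) := (hEiT.add_left (hbi T)).eq
  have h2' : (Ej + bj) * T = T * (Ej + bj) := (hEjT.add_left (hbj T)).eq
  have hEb : (Ej + bj) * (Ei + bi) = (Ei + bi) * (Ej + bj) :=
    (((hEE.add_right (hbj Ei).symm).add_left (hbi (Ej + bj))).symm).eq
  have hBDl : B * D = (Xi * Xj) * ((T + 1) * T) * ((Ei + bi) * (Ej + bj)) := by
    calc B * D = Xi * T * ((Ei + bi) * Xj) * (T * (Ej + bj)) := by rw [hB, hD]; noncomm_ring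
    _ = Xi * T * (Xj * (Ei + bi)) * (T * (Ej + bj)) := by rw [h1]
    _ = Xi * (T * Xj) * ((Ei + bi) * T) * (Ej + bj) := by noncomm_ring
    _ = Xi * (Xj * (T + 1)) * (T * (Ei + bi)) * (Ej + bj) := by rw [hTXj, h2]
    _ = (Xi * Xj) * ((T + 1) * T) * ((Ei + bi) * (Ej + bj)) := by noncomm_ring
  have hBDr : D * B = (Xj * Xi) * ((T + 1) * T) * ((Ej + bj) * (Ei + bi)) := by
    calc D * B = Xj * T * ((Ej + bj) * Xi) * (T * (Ei + bi)) := by rw [hB, hD]; noncomm_ring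
    _ = Xj * T * (Xi * (Ej + bj)) * (T * (Ei + bi)) := by rw [h1']
    _ = Xj * (T * Xi) * ((Ej + bj) * T) * (Ei + bi) := by noncomm_ring
    _ = Xj * (Xi * (T + 1)) * (T * (Ej + bj)) * (Ei + bi) := by rw [hTXi, h2']
    _ = (Xj * Xi) * ((T + 1) * T) * ((Ej + bj) * (Ei + bi)) := by noncomm_ring
  have hBD : D * B = B * D := by rw [hBDl, hBDr, hXX.symm.eq, hEb]
  have e1 : (A - B) * (C - D) = A * C - A * D - B * C + B * D := by noncomm_ring
  have e2 : (C - D) * (A - B) = C * A - C * B - D * A + D * B := by noncomm_ring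
  rw [e1, e2, hAC, hAD, hBC, hBD]
  abel


lemma sum_euler_xMul {m : ℕ} (i : Fin m) :
    (∑ k, eulerOp k) * xMulOp i = xMulOp i * (∑ k, eulerOp k) + xMulOp i := by
  rw [Finset.sum_mul]
  simp only [euler_xMul, Finset.sum_add_distrib, Finset.sum_ite_eq' Finset.univ i,
    Finset.mem_univ, if_pos, Finset.mul_sum]

lemma T_xMul {m : ℕ} (a : ℂ) (i : Fin m) :
    ((∑ k, eulerOp k) + a • 1) * xMulOp i
      = xMulOp i * (((∑ k, eulerOp k) + a • 1) + 1) := by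
  rw [add_mul, sum_euler_xMul, (central_smul a (xMulOp i)).eq, mul_add, mul_add, mul_one]
  abel

lemma euler_T_comm {m : ℕ} (a : ℂ) (i : Fin m) :
    Commute (eulerOp i) ((∑ k, eulerOp k) + a • 1) :=
  (Commute.sum_right _ _ _ fun k _ => euler_comm i k).add_right (central_smul a _).symm

/-- For `i ≠ j`, the Lauricella `F_A` operators commute: `[ℓ_i^A, ℓ_j^A] = 0`. -/
theorem ellA_commute {m : ℕ} (hm : 1 ≤ m) (a : ℂ) (b c : Fin m → ℂ)
    (i j : Fin m) (hij : i ≠ j) :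
    ellA a b c i * ellA a b c j = ellA a b c j * ellA a b c i := by
  unfold ellA
  exact abstract_comm (eulerOp i) (eulerOp j) (xMulOp i) (xMulOp j) _
    ((c i - 1) • 1) ((c j - 1) • 1) (b i • 1) (b j • 1)
    (central_smul _) (central_smul _) (central_smul _) (central_smul _)
    (euler_comm i j) (euler_T_comm a i) (euler_T_comm a j)
    (xMul_euler_comm hij) (xMul_euler_comm hij.symm) (xMul_comm i j)
    (T_xMul a i) (T_xMul a j)
end

section
/- Let R be a commutative ring, m ≥ 1, x_1,…,x_m ∈ R. Then Π_{ε ∈ {0,1}^m} det A_ε = (x_1⋯x_m)^{2^m} · Π_{∅ ≠ S ⊆ {1,…,m}} (−1)^{|S|−1} (Σ_{i∈S} Π_{j∈S, j≠i} x_j − Π_{j∈S} x_j), where A_ε is the m×m matrix with (i,i) entry x_i(1 − ε_i x_i) and (i,k) entry ε_i x_k for k ≠ i. (This product is the defining polynomial of the singular locus of Lauricella's system I_B(m).) -/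
/-- The matrix `A_ε` of the linear system coming from the `(0,1)`-initial forms `L_i^B`
of Lauricella's `F_B` system: the `(i,i)` entry is `x_i(1 − ε_i x_i)` and the `(i,k)`
entry for `k ≠ i` is `ε_i x_k`, where `ε ∈ {0,1}^m`. -/
def AMat {R : Type*} [CommRing R] {m : ℕ} (x : Fin m → R) (ε : Fin m → Bool) :
    Matrix (Fin m) (Fin m) R :=
  Matrix.of fun i j =>
    if i = j then x i * (1 - (if ε i then x i else 0)) else (if ε i then x j else 0)

/-!
With `S = {i | ε i}`, `A_ε = B_S * diag(x)`, where `B_S` has the rows of the identity outside `S`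
and the rows of `J - diag(x)` on `S` (`J` the all-ones matrix). Hence `det A_ε` is `x_1⋯x_m` times
the principal minor `det (J - diag(x))` on `S`, a diagonal plus rank-one determinant. Over an
arbitrary commutative ring that is evaluated by the matrix determinant lemma in adjugate form,
`det (A + u vᵀ) = det A + vᵀ adj(A) u`, proved by adding the rank-one term one row at a time.
-/

open Finset Matrix

namespace Matrix

variable {n R : Type*} [Fintype n] [DecidableEq n] [CommRing R]

theorem det_add_vecMulVec_piecewise (A : Matrix n n R) (u v : n → R) (T : Finset n) :
    (A + vecMulVec (T.piecewise u 0) v).det = A.det + ∑ i ∈ T, u i * (A.updateRow i v).det := by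
  induction T using Finset.induction_on with
  | empty => simp
  | insert k T hk ih =>
    -- the rows in `T` are `A i + u i • v`, and `v` is now row `k`
    have hrow : ((A + vecMulVec (T.piecewise u 0) v).updateRow k v).det = (A.updateRow k v).det :=
      det_eq_of_forall_row_eq_smul_add_const (T.piecewise u 0) k (by simp [hk]) fun i j => by
        rcases eq_or_ne i k with rfl | hik
        · simp [hk]
        · simp [hik, vecMulVec_apply]
    have hsplit : A + vecMulVec ((insert k T).piecewise u 0) v =
        (A + vecMulVec (T.piecewise u 0) v).updateRow k (A k + u k • v) := by
      ext i j
      rcases eq_or_ne i k with rfl | hik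
      · simp [vecMulVec_apply]
      · simp [hik, vecMulVec_apply, Finset.piecewise_insert_of_ne]
    have hkeep : (A + vecMulVec (T.piecewise u 0) v).updateRow k (A k) =
        A + vecMulVec (T.piecewise u 0) v := by
      ext i j
      rcases eq_or_ne i k with rfl | hik
      · simp [hk, vecMulVec_apply]
      · simp [hik]
    rw [hsplit, det_updateRow_add, det_updateRow_smul, hrow, hkeep, ih, sum_insert hk]
    ring

theorem det_updateRow_eq_adjugate_transpose_mulVec (A : Matrix n n R) (i : n) (v : n → R) :
    (A.updateRow i v).det = (adjugate Aᵀ *ᵥ v) i := by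
  rw [← cramer_eq_adjugate_mulVec, cramer_apply, ← det_transpose, ← updateCol_transpose]

theorem det_add_vecMulVec (A : Matrix n n R) (u v : n → R) :
    (A + vecMulVec u v).det = A.det + v ⬝ᵥ adjugate A *ᵥ u := by
  have hrows := det_add_vecMulVec_piecewise A u v univ
  rw [piecewise_univ] at hrows
  simp only [hrows, det_updateRow_eq_adjugate_transpose_mulVec, ← adjugate_transpose]
  rw [dotProduct_mulVec, mulVec_transpose, dotProduct_comm]
  rfl

theorem det_diagonal_add_vecMulVec (d u v : n → R) :
    (diagonal d + vecMulVec u v).det = ∏ i, d i + ∑ i, u i * v i * ∏ j ∈ univ.erase i, d j := by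
  simp only [det_add_vecMulVec, det_diagonal, adjugate_diagonal, dotProduct, mulVec_diagonal]
  congr 1
  exact sum_congr rfl fun i _ => by ring

theorem det_vecMulVec_one_one_sub_diagonal (y : n → R) :
    (vecMulVec 1 1 - diagonal y).det =
      (-1) ^ Fintype.card n * (∏ i, y i - ∑ i, ∏ j ∈ univ.erase i, y j) := by
  rw [sub_eq_neg_add, diagonal_neg, det_diagonal_add_vecMulVec]
  simp only [prod_neg, card_erase_of_mem (mem_univ _), card_univ, Pi.one_apply, one_mul,
    ← mul_sum]
  rcases isEmpty_or_nonempty n with hn | hn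
  · simp
  · rw [← Nat.sub_add_cancel Fintype.card_pos, pow_succ, Nat.add_sub_cancel]
    ring

end Matrix

section

variable {R : Type*} [CommRing R] {m : ℕ}

theorem AMat_decide_mem_eq_mul_diagonal (x : Fin m → R) (S : Finset (Fin m)) :
    AMat x (fun i => decide (i ∈ S)) =
      of (S.piecewise (vecMulVec 1 1 - diagonal x).row (1 : Matrix (Fin m) (Fin m) R).row) *
        diagonal x := by
  ext i j
  rw [mul_diagonal, of_apply]
  by_cases hi : i ∈ S
  · rw [piecewise_eq_of_mem _ _ _ hi]
    simp only [AMat, Matrix.row, of_apply, Matrix.sub_apply, vecMulVec_apply, diagonal_apply,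
      Pi.one_apply, hi, decide_true, if_true]
    split_ifs <;> subst_vars <;> ring
  · rw [piecewise_eq_of_notMem _ _ _ hi]
    simp only [AMat, Matrix.row, of_apply, one_apply, hi, decide_false, Bool.false_eq_true,
      if_false]
    split_ifs <;> subst_vars <;> ring

theorem det_AMat_decide_mem (x : Fin m → R) (S : Finset (Fin m)) :
    (AMat x (fun i => decide (i ∈ S))).det =
      (-1) ^ S.card * (∏ j ∈ S, x j - ∑ i ∈ S, ∏ j ∈ S.erase i, x j) * ∏ i, x i := by
  have hsub : (vecMulVec 1 1 - diagonal x).submatrix ((↑) : S → Fin m) (↑) =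
      vecMulVec 1 1 - diagonal (fun i : S => x i) := by
    ext i j
    simp only [submatrix_apply, Matrix.sub_apply, vecMulVec_apply, diagonal_apply,
      Subtype.ext_iff, Pi.one_apply]
  rw [AMat_decide_mem_eq_mul_diagonal, det_mul, det_piecewise_one_eq_submatrix_det, hsub,
    det_vecMulVec_one_one_sub_diagonal, det_diagonal, Fintype.card_coe, prod_coe_sort,
    univ_eq_attach]
  simp_rw [prod_erase_attach]
  rw [sum_attach S (fun i => ∏ j ∈ S.erase i, x j)]

end

def Finset.equivBoolFun (α : Type*) [Fintype α] [DecidableEq α] : Finset α ≃ (α → Bool) where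
  toFun S i := decide (i ∈ S)
  invFun ε := univ.filter fun i => ε i
  left_inv S := by ext; simp
  right_inv ε := by ext; simp

theorem prod_AMat_det_general {R : Type*} [CommRing R] (m : ℕ) (x : Fin m → R) :
    ∏ ε : Fin m → Bool, (AMat x ε).det =
      (∏ i, x i) ^ (2 ^ m) *
        ∏ S ∈ (Finset.univ : Finset (Fin m)).powerset.filter (fun S => S.Nonempty),
          ((-1 : R) ^ (S.card - 1) *
            ((∑ i ∈ S, ∏ j ∈ S.erase i, x j) - ∏ j ∈ S, x j)) := by
  rw [← Fintype.prod_equiv (Finset.equivBoolFun (Fin m))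
    (fun S => (AMat x (Finset.equivBoolFun (Fin m) S)).det) _ fun S => rfl]
  simp only [Finset.equivBoolFun, Equiv.coe_fn_mk, det_AMat_decide_mem]
  rw [prod_mul_distrib, prod_const, card_univ, Fintype.card_finset, Fintype.card_fin,
    powerset_univ, prod_filter, mul_comm]
  congr 1
  refine Finset.prod_congr rfl fun S _ => ?_
  rcases S.eq_empty_or_nonempty with rfl | hS
  · simp
  · rw [if_pos hS, ← Nat.sub_add_cancel hS.card_pos, pow_succ, Nat.add_sub_cancel]
    ring

/-- The product of the determinants `det A_ε` over all `ε ∈ {0,1}^m` equals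
`(x_1⋯x_m)^{2^m} ⋅ Π_{∅≠S⊆{1,…,m}} (−1)^{|S|−1}(Σ_{i∈S} Π_{j∈S,j≠i} x_j − Π_{j∈S} x_j)`;
this is the defining polynomial of the singular locus of Lauricella's system `I_B(m)`. -/
theorem prod_AMat_det {R : Type*} [CommRing R] (m : ℕ) (hm : 1 ≤ m) (x : Fin m → R) :
    ∏ ε : Fin m → Bool, (AMat x ε).det =
      (∏ i, x i) ^ (2 ^ m) *
        ∏ S ∈ (Finset.univ : Finset (Fin m)).powerset.filter (fun S => S.Nonempty),
          ((-1 : R) ^ (S.card - 1) *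
            ((∑ i ∈ S, ∏ j ∈ S.erase i, x j) - ∏ j ∈ S, x j)) :=
  prod_AMat_det_general m x
end

section
/- Let R be a commutative ring, m ≥ 1, x_1,…,x_m ∈ R. Then Π_{ε ∈ {0,1}^m} det B_ε = (x_1⋯x_m)^{2^m} · Π_{∅ ≠ S ⊆ {1,…,m}} (1 − Σ_{i∈S} x_i), where B_ε is the m×m matrix with (i,i) entry x_i(1 − ε_i x_i) and (i,k) entry −ε_i x_i x_k for k ≠ i. (This product is the defining polynomial of the projection of V(L_1^A,…,L_m^A) ∖ {ξ = 0}, which gives the singular locus of Lauricella's system I_A(m).) -/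
/-!
Each `B_ε` is `diag(x) (1 − u xᵀ)` with `u` the indicator vector of `ε`, a rank-one
perturbation of the identity, so `det B_ε = x_1⋯x_m (1 − Σ_{ε_i = 1} x_i)` by the matrix
determinant lemma. Taking the product over the `2^m` vectors `ε`, i.e. over all subsets
`S = {i | ε_i = 1}`, gives the claim; the empty subset contributes the factor `1`.
-/

/-- The matrix `B_ε` of the linear system coming from the `(0,1)`-initial forms `L_i^A`
of Lauricella's `F_A` system: the `(i,i)` entry is `x_i(1 − ε_i x_i)` and the `(i,k)`
entry for `k ≠ i` is `−ε_i x_i x_k`, where `ε ∈ {0,1}^m`. -/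
def BMat {R : Type*} [CommRing R] {m : ℕ} (x : Fin m → R) (ε : Fin m → Bool) :
    Matrix (Fin m) (Fin m) R :=
  Matrix.of fun i j =>
    if i = j then x i * (1 - (if ε i then x i else 0)) else -(if ε i then x i * x j else 0)

namespace Matrix

theorem det_one_sub_replicateCol_mul_replicateRow {n α ι : Type*} [Fintype n] [DecidableEq n]
    [CommRing α] [Unique ι] (u v : n → α) :
    det (1 - replicateCol ι u * replicateRow ι v) = 1 - v ⬝ᵥ u := by
  rw [det_one_sub_mul_comm, det_unique, sub_apply, one_apply_eq,
    replicateRow_mul_replicateCol_apply]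

end Matrix

open Matrix in
theorem BMat_eq_diagonal_mul {R : Type*} [CommRing R] {m : ℕ} (x : Fin m → R)
    (ε : Fin m → Bool) :
    BMat x ε = diagonal x *
      (1 - replicateCol Unit (fun i => if ε i then (1 : R) else 0) * replicateRow Unit x) := by
  ext i j
  rw [diagonal_mul, Matrix.sub_apply, mul_apply, Fintype.sum_unique, one_apply]
  by_cases hij : i = j <;> cases ε i <;> simp [BMat, hij]

theorem det_BMat {R : Type*} [CommRing R] {m : ℕ} (x : Fin m → R) (ε : Fin m → Bool) :
    (BMat x ε).det = (∏ i, x i) * (1 - ∑ i with ε i, x i) := by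
  rw [BMat_eq_diagonal_mul, Matrix.det_mul, Matrix.det_diagonal,
    Matrix.det_one_sub_replicateCol_mul_replicateRow, dotProduct, Finset.sum_filter]
  simp only [mul_ite, mul_one, mul_zero]

theorem Fintype.prod_fun_bool_eq_prod_finset {α M : Type*} [Fintype α] [DecidableEq α]
    [CommMonoid M] (f : Finset α → M) :
    ∏ ε : α → Bool, f {i | ε i} = ∏ S : Finset α, f S :=
  Finset.prod_nbij' (fun ε => ({i | ε i} : Finset α)) (fun S i => decide (i ∈ S))
    (by simp) (by simp) (fun ε _ => by ext; simp) (fun S _ => by ext; simp) (fun _ _ => rfl)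

theorem prod_BMat_det_general {R : Type*} [CommRing R] (m : ℕ) (x : Fin m → R) :
    ∏ ε : Fin m → Bool, (BMat x ε).det =
      (∏ i, x i) ^ (2 ^ m) *
        ∏ S ∈ (Finset.univ : Finset (Fin m)).powerset.filter (fun S => S.Nonempty),
          (1 - ∑ i ∈ S, x i) := by
  have h_empty : ∀ S ∈ (Finset.univ : Finset (Fin m)).powerset,
      1 - ∑ i ∈ S, x i ≠ 1 → S.Nonempty := by
    intro S _ hS
    contrapose! hS
    simp [hS]
  simp_rw [det_BMat, Finset.prod_mul_distrib, Finset.prod_const, Finset.card_univ,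
    Fintype.card_fun, Fintype.card_bool, Fintype.card_fin,
    Fintype.prod_fun_bool_eq_prod_finset (fun S => 1 - ∑ i ∈ S, x i),
    Finset.prod_filter_of_ne h_empty, Finset.powerset_univ]

/-- The product of the determinants `det B_ε` over all `ε ∈ {0,1}^m` equals
`(x_1⋯x_m)^{2^m} ⋅ Π_{∅≠S⊆{1,…,m}} (1 − Σ_{i∈S} x_i)`; this is the defining polynomial
of the projection of `V(L_1^A,…,L_m^A) ∖ {ξ = 0}` for Lauricella's system `I_A(m)`. -/
theorem prod_BMat_det {R : Type*} [CommRing R] (m : ℕ) (hm : 1 ≤ m) (x : Fin m → R) :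
    ∏ ε : Fin m → Bool, (BMat x ε).det =
      (∏ i, x i) ^ (2 ^ m) *
        ∏ S ∈ (Finset.univ : Finset (Fin m)).powerset.filter (fun S => S.Nonempty),
          (1 - ∑ i ∈ S, x i) :=
  prod_BMat_det_general m x
end

section
/- For x ∈ ℂ^m, there exists ξ ∈ ℂ^m with ξ ≠ 0 such that x_i ξ_i (x_i(1 − x_i)ξ_i + Σ_{j≠i} x_j ξ_j) = 0 for all i = 1,…,m, if and only if x_1⋯x_m · Π_{∅ ≠ S ⊆ {1,…,m}} (Σ_{i∈S} Π_{j∈S, j≠i} x_j − Π_{j∈S} x_j) = 0. (This set equality computes the singular locus of Lauricella's system I_B(m): Sing(I_B(m)) = V(x_1⋯x_m Π_{i}(1−x_i) Π_{i<j}(x_i x_j − x_i − x_j) ⋯ (x_1⋯x_m − Σ_k x_1⋯x̂_k⋯x_m)), the main theorem for F_B.) -/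
private lemma keyIB (m : ℕ) (x ξ : Fin m → ℂ) (i : Fin m) :
    x i * ξ i * (x i * (1 - x i) * ξ i + ∑ j ∈ Finset.univ.erase i, x j * ξ j)
      = (x i * ξ i) * ((∑ j, x j * ξ j) - x i * (x i * ξ i)) := by
  rw [Finset.sum_erase_eq_sub (Finset.mem_univ i)]
  ring

/-- Singular locus of Lauricella's system `I_B(m)`: for `x ∈ ℂ^m`, there exists `ξ ≠ 0`
with `L_i^B(x,ξ) = x_i ξ_i (x_i(1−x_i)ξ_i + Σ_{j≠i} x_j ξ_j) = 0` for all `i` iff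
`x_1⋯x_m ⋅ Π_{∅≠S⊆{1,…,m}} (Σ_{i∈S} Π_{j∈S,j≠i} x_j − Π_{j∈S} x_j) = 0`. -/
theorem singular_locus_IB (m : ℕ) (hm : 1 ≤ m) (x : Fin m → ℂ) :
    (∃ ξ : Fin m → ℂ, ξ ≠ 0 ∧ ∀ i,
        x i * ξ i *
          (x i * (1 - x i) * ξ i + ∑ j ∈ Finset.univ.erase i, x j * ξ j) = 0) ↔
      (∏ i, x i) *
        ∏ S ∈ (Finset.univ : Finset (Fin m)).powerset.filter (fun S => S.Nonempty),
          ((∑ i ∈ S, ∏ j ∈ S.erase i, x j) - ∏ j ∈ S, x j) = 0 := by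
  classical
  constructor
  · rintro ⟨ξ, hξ, h⟩
    rw [mul_eq_zero]
    by_cases hx : ∃ k, x k = 0
    · obtain ⟨k, hk⟩ := hx
      exact Or.inl (Finset.prod_eq_zero (Finset.mem_univ k) hk)
    · push_neg at hx
      right
      set u : Fin m → ℂ := fun i => x i * ξ i with hu
      set s : ℂ := ∑ j, u j with hs
      have h' : ∀ i, u i * (s - x i * u i) = 0 := fun i => by
        rw [hu, hs]
        rw [← keyIB m x ξ i]
        exact h i
      set S : Finset (Fin m) := Finset.univ.filter (fun i => u i ≠ 0) with hSdef
      have hSne : S.Nonempty := by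
        obtain ⟨i, hi⟩ := Function.ne_iff.mp hξ
        exact ⟨i, Finset.mem_filter.mpr ⟨Finset.mem_univ i,
          mul_ne_zero (hx i) (by simpa using hi)⟩⟩
      have hmem : ∀ i ∈ S, x i * u i = s := by
        intro i hi
        have hiu : u i ≠ 0 := (Finset.mem_filter.mp hi).2
        have := (mul_eq_zero.mp (h' i)).resolve_left hiu
        exact (sub_eq_zero.mp this).symm
      have hsne : s ≠ 0 := by
        obtain ⟨i₀, hi₀⟩ := hSne
        rw [← hmem i₀ hi₀]
        exact mul_ne_zero (hx i₀) ((Finset.mem_filter.mp hi₀).2)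
      have hsum : ∑ i ∈ S, u i = s := by
        rw [hs]
        apply Finset.sum_subset (Finset.subset_univ S)
        intro i _ hiS
        by_contra hne
        exact hiS (Finset.mem_filter.mpr ⟨Finset.mem_univ i, hne⟩)
      apply Finset.prod_eq_zero
        (Finset.mem_filter.mpr ⟨Finset.mem_powerset.mpr (Finset.subset_univ S), hSne⟩)
      have key : s * (∑ i ∈ S, ∏ j ∈ S.erase i, x j) = s * (∏ j ∈ S, x j) := by
        rw [Finset.mul_sum]
        calc ∑ i ∈ S, s * ∏ j ∈ S.erase i, x j
            = ∑ i ∈ S, u i * ∏ j ∈ S, x j := by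
              refine Finset.sum_congr rfl fun i hi => ?_
              rw [← hmem i hi, ← Finset.mul_prod_erase S x hi]
              ring
          _ = (∑ i ∈ S, u i) * ∏ j ∈ S, x j := (Finset.sum_mul _ _ _).symm
          _ = s * ∏ j ∈ S, x j := by rw [hsum]
      exact sub_eq_zero.mpr (mul_left_cancel₀ hsne key)
  · intro h
    by_cases hx : ∃ k, x k = 0
    · obtain ⟨k, hk⟩ := hx
      refine ⟨fun j => if j = k then 1 else 0, ?_, ?_⟩
      · intro h0
        have := congrFun h0 k
        simp at this
      · intro i
        rcases eq_or_ne i k with rfl | hik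
        · simp [hk]
        · simp [hik]
    · push_neg at hx
      rw [mul_eq_zero] at h
      rcases h with h | h
      · exact absurd h (Finset.prod_ne_zero_iff.mpr fun i _ => hx i)
      · obtain ⟨S, hSmem, hfac⟩ := Finset.prod_eq_zero_iff.mp h
        have hSne : S.Nonempty := (Finset.mem_filter.mp hSmem).2
        have hsum1 : ∑ i ∈ S, (x i)⁻¹ = 1 := by
          have hP : (∏ j ∈ S, x j) ≠ 0 := Finset.prod_ne_zero_iff.mpr fun j _ => hx j
          apply mul_left_cancel₀ hP
          rw [Finset.mul_sum, mul_one]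
          calc ∑ i ∈ S, (∏ j ∈ S, x j) * (x i)⁻¹
              = ∑ i ∈ S, ∏ j ∈ S.erase i, x j := by
                refine Finset.sum_congr rfl fun i hi => ?_
                rw [← Finset.mul_prod_erase S x hi, mul_comm, ← mul_assoc,
                  inv_mul_cancel₀ (hx i), one_mul]
            _ = ∏ j ∈ S, x j := sub_eq_zero.mp hfac
        set ξ : Fin m → ℂ := fun i => if i ∈ S then (x i)⁻¹ * (x i)⁻¹ else 0 with hξdef
        refine ⟨ξ, ?_, ?_⟩
        · obtain ⟨i, hi⟩ := hSne
          intro h0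
          have := congrFun h0 i
          simp [hξdef, hi, hx i] at this
        · intro i
          rw [keyIB]
          have hsum' : (∑ j, x j * ξ j) = 1 := by
            have heach : ∀ j, x j * ξ j = if j ∈ S then (x j)⁻¹ else 0 := by
              intro j
              rw [hξdef]
              simp only
              split
              · field_simp
              · ring
            rw [Finset.sum_congr rfl fun j _ => heach j]
            rw [Finset.sum_ite_mem, Finset.univ_inter, hsum1]
          rw [hsum']
          by_cases hiS : i ∈ S
          · have hxi : x i * ξ i = (x i)⁻¹ := by
              rw [hξdef]
              simp only [if_pos hiS]
              field_simp
            rw [hxi]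
            rw [mul_inv_cancel₀ (hx i)]
            ring
          · have hxi : ξ i = 0 := by rw [hξdef]; simp only [if_neg hiS]
            rw [hxi]
            ring
end

section
/- For x ∈ ℂ^m, there exists ξ ∈ ℂ^m with ξ ≠ 0 such that x_i ξ_i (x_i ξ_i − x_i Σ_{j=1}^m x_j ξ_j) = 0 for all i = 1,…,m, if and only if x_1⋯x_m · Π_{∅ ≠ S ⊆ {1,…,m}} (1 − Σ_{i∈S} x_i) = 0. (This set equality computes the projection π(V(L_1^A,…,L_m^A) ∖ {ξ = 0}), which equals the singular locus of Lauricella's system I_A(m): Sing(I_A(m)) = V(x_1⋯x_m Π_{i}(1−x_i) Π_{i<j}(1−x_i−x_j) ⋯ (1−x_1−⋯−x_m)), the main theorem for F_A.) -/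
/-- Singular locus of Lauricella's system `I_A(m)`: for `x ∈ ℂ^m`, there exists `ξ ≠ 0`
with `L_i^A(x,ξ) = x_i ξ_i (x_i ξ_i − x_i Σ_j x_j ξ_j) = 0` for all `i` iff
`x_1⋯x_m ⋅ Π_{∅≠S⊆{1,…,m}} (1 − Σ_{i∈S} x_i) = 0`. -/
theorem singular_locus_IA (m : ℕ) (hm : 1 ≤ m) (x : Fin m → ℂ) :
    (∃ ξ : Fin m → ℂ, ξ ≠ 0 ∧ ∀ i,
        x i * ξ i * (x i * ξ i - x i * ∑ j, x j * ξ j) = 0) ↔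
      (∏ i, x i) *
        ∏ S ∈ (Finset.univ : Finset (Fin m)).powerset.filter (fun S => S.Nonempty),
          (1 - ∑ i ∈ S, x i) = 0 := by
  rw [mul_eq_zero, Finset.prod_eq_zero_iff, Finset.prod_eq_zero_iff]
  constructor
  · rintro ⟨ξ, hξ, h⟩
    by_cases hx : ∃ i, x i = 0
    · obtain ⟨i, hi⟩ := hx
      exact Or.inl ⟨i, Finset.mem_univ i, hi⟩
    push_neg at hx
    right
    set T := ∑ j, x j * ξ j with hT
    have key : ∀ i, ξ i = 0 ∨ ξ i = T := by
      intro i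
      rcases mul_eq_zero.mp (h i) with h1 | h2
      · rcases mul_eq_zero.mp h1 with h1 | h1
        · exact absurd h1 (hx i)
        · exact Or.inl h1
      · right
        have : x i * (ξ i - T) = 0 := by linear_combination h2
        rcases mul_eq_zero.mp this with h3 | h3
        · exact absurd h3 (hx i)
        · exact sub_eq_zero.mp h3
    have hTne : T ≠ 0 := by
      intro hT0
      apply hξ
      funext i
      rcases key i with h' | h'
      · exact h'
      · rw [h', hT0]; rfl
    set S := Finset.univ.filter (fun i => ξ i ≠ 0) with hS
    have hSne : S.Nonempty := by
      by_contra hc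
      rw [Finset.not_nonempty_iff_eq_empty] at hc
      apply hξ
      funext i
      show ξ i = 0
      by_contra hne
      have : i ∈ S := by simp [hS, hne]
      simp [hc] at this
    refine ⟨S, ?_, ?_⟩
    · simp [Finset.mem_filter, Finset.mem_powerset, hSne]
    · have hTeq : T = T * ∑ i ∈ S, x i := by
        conv_lhs => rw [hT]
        rw [Finset.mul_sum]
        rw [← Finset.sum_subset (Finset.subset_univ S) (fun i _ hiS => by
          have : ξ i = 0 := by
            by_contra hc; exact hiS (by simp [hS, hc])
          rw [this, mul_zero])]
        refine Finset.sum_congr rfl (fun i hi => ?_)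
        have hi' : ξ i ≠ 0 := by simpa [hS] using hi
        rcases key i with h' | h'
        · exact absurd h' hi'
        · rw [h']; ring
      have : (1 : ℂ) - ∑ i ∈ S, x i = 0 := by
        have h1 : T * 1 = T * ∑ i ∈ S, x i := by rw [mul_one]; exact hTeq
        have := mul_left_cancel₀ hTne h1
        rw [← this]; ring
      exact this
  · rintro (⟨i, _, hi⟩ | ⟨S, hSmem, hS⟩)
    · refine ⟨Pi.single i 1, ?_, ?_⟩
      · intro hc
        have := congrFun hc i
        simp at this
      · intro j
        by_cases hji : j = i
        · subst hji; rw [hi]; ring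
        · rw [Pi.single_eq_of_ne hji]; ring
    · simp only [Finset.mem_filter, Finset.mem_powerset] at hSmem
      have hSsum : ∑ i ∈ S, x i = 1 := by linear_combination -hS
      refine ⟨fun j => if j ∈ S then 1 else 0, ?_, ?_⟩
      · obtain ⟨i, hi⟩ := hSmem.2
        intro hc
        have := congrFun hc i
        simp [hi] at this
      · intro i
        have hT : (∑ j, x j * if j ∈ S then (1:ℂ) else 0) = 1 := by
          simp only [mul_ite, mul_one, mul_zero, Finset.sum_ite_mem, Finset.univ_inter]
          exact hSsum
        rw [hT]
        by_cases hiS : i ∈ S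
        · simp [hiS]
        · simp [hiS]
end

section
/- Let V ⊆ (ℂ∖{0})^m be open, let u : ℂ^m → ℂ be analytic on ι(V), where ι(X) = (1/X_1,…,1/X_m), and set v = u ∘ ι on V. Then for every i and every X ∈ V, applying the transformed operator p_i^A = X_i θ_{X_i}(−θ_{X_i} + c_i − 1) + (Σ_{j=1}^m θ_{X_j} − a)(θ_{X_i} − b_i) to v at X yields (p_i^A v)(X) = −X_i · (ℓ_i^A u)(ι(X)). That is, under the change of coordinates X_i = 1/x_i, the Lauricella F_A operator ℓ_i^A transforms (up to left multiplication by the unit −X_i) into p_i^A. -/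
/-- The Euler operator `θ_i` acting on functions `ℂ^m → ℂ`:
`(θ_i f)(x) = x_i ⋅ (∂f/∂x_i)(x)`, where the partial derivative is the Fréchet
derivative evaluated at the `i`-th standard basis vector. -/
noncomputable def eulerOpFun {m : ℕ} (i : Fin m) (f : (Fin m → ℂ) → ℂ) :
    (Fin m → ℂ) → ℂ :=
  fun x => x i * fderiv ℂ f x (Pi.single i 1)

/-- The Lauricella `F_A` operator
`ℓ_i^A = θ_i(θ_i + c_i − 1) − x_i(θ_1 + ⋯ + θ_m + a)(θ_i + b_i)`
acting on functions `ℂ^m → ℂ`. -/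
noncomputable def ellAFun {m : ℕ} (a : ℂ) (b c : Fin m → ℂ) (i : Fin m)
    (u : (Fin m → ℂ) → ℂ) : (Fin m → ℂ) → ℂ :=
  eulerOpFun i (eulerOpFun i u + (c i - 1) • u) -
    fun x => x i *
      ((∑ j, eulerOpFun j (eulerOpFun i u + b i • u)) x +
        a * (eulerOpFun i u + b i • u) x)

/-- The transformed operator
`p_i^A = X_i θ_{X_i}(−θ_{X_i} + c_i − 1) + (Σ_j θ_{X_j} − a)(θ_{X_i} − b_i)`
acting on functions `ℂ^m → ℂ`. -/
noncomputable def pAFun {m : ℕ} (a : ℂ) (b c : Fin m → ℂ) (i : Fin m)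
    (v : (Fin m → ℂ) → ℂ) : (Fin m → ℂ) → ℂ :=
  (fun X => X i * eulerOpFun i ((c i - 1) • v - eulerOpFun i v) X) +
    ((∑ j, eulerOpFun j (eulerOpFun i v - b i • v)) -
      a • (eulerOpFun i v - b i • v))


/-! The coordinatewise inversion `ι` has `∂ι/∂X_i = -X_i⁻² e_i`, so by the chain rule
`θ_{X_i}(f ∘ ι) = -(θ_i f) ∘ ι` wherever `f` is differentiable at the image point. Near `X` this
rewrites the inner expressions of `p_i^A v` as `g ∘ ι` and `-(w ∘ ι)`, where
`g = θ_i u + (c_i - 1) u` and `w = θ_i u + b_i u` are analytic; a second application, to `g` and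
`w`, reduces both sides to the same combination of `θ_i g`, `θ_j w` and `w` at `ι X`. -/

open Filter Topology

local notation "ι" => fun X : Fin _ → ℂ => fun j => (X j)⁻¹

section

variable {m : ℕ}

theorem hasFDerivAt_pi_inv {X : Fin m → ℂ} (hX : ∀ j, X j ≠ 0) :
    HasFDerivAt ι (ContinuousLinearMap.pi fun j =>
      -((X j) ^ 2)⁻¹ • (ContinuousLinearMap.proj j : (Fin m → ℂ) →L[ℂ] ℂ)) X :=
  hasFDerivAt_pi.2 fun j => (hasDerivAt_inv (hX j)).comp_hasFDerivAt X (hasFDerivAt_apply j X)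

theorem eulerOpFun_congr (i : Fin m) {f g : (Fin m → ℂ) → ℂ} {x : Fin m → ℂ}
    (h : f =ᶠ[𝓝 x] g) : eulerOpFun i f x = eulerOpFun i g x := by
  rw [eulerOpFun, eulerOpFun, h.fderiv_eq]

theorem eulerOpFun_neg (i : Fin m) (f : (Fin m → ℂ) → ℂ) :
    eulerOpFun i (-f) = -eulerOpFun i f := by
  ext x
  simp [eulerOpFun, fderiv_neg]

theorem AnalyticAt.eulerOpFun (i : Fin m) {f : (Fin m → ℂ) → ℂ} {x : Fin m → ℂ}
    (hf : AnalyticAt ℂ f x) : AnalyticAt ℂ (eulerOpFun i f) x :=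
  ((ContinuousLinearMap.proj i).analyticAt x).mul
    (((ContinuousLinearMap.apply ℂ ℂ (Pi.single i 1)).analyticAt _).comp hf.fderiv)

theorem eulerOpFun_comp_inv (i : Fin m) {f : (Fin m → ℂ) → ℂ} {X : Fin m → ℂ}
    (hX : ∀ j, X j ≠ 0) (hf : DifferentiableAt ℂ f (ι X)) :
    eulerOpFun i (f ∘ ι) X = -eulerOpFun i f (ι X) := by
  have hdir : (ContinuousLinearMap.pi fun j =>
      -((X j) ^ 2)⁻¹ • (ContinuousLinearMap.proj j : (Fin m → ℂ) →L[ℂ] ℂ)) (Pi.single i 1) =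
      -((X i) ^ 2)⁻¹ • (Pi.single i 1 : Fin m → ℂ) := by
    ext j
    rcases eq_or_ne j i with rfl | hji <;> simp [*]
  rw [eulerOpFun, eulerOpFun, (hf.hasFDerivAt.comp X (hasFDerivAt_pi_inv hX)).fderiv,
    ContinuousLinearMap.comp_apply, hdir, map_smul, smul_eq_mul]
  field_simp [hX i]

theorem eulerOpFun_comp_inv_eventuallyEq (i : Fin m) {f : (Fin m → ℂ) → ℂ} {X : Fin m → ℂ}
    (hX : ∀ j, X j ≠ 0) (hf : AnalyticAt ℂ f (ι X)) :
    eulerOpFun i (f ∘ ι) =ᶠ[𝓝 X] -(eulerOpFun i f ∘ ι) := by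
  have htorus : ∀ᶠ Y in 𝓝 X, ∀ j, Y j ≠ 0 :=
    eventually_all.2 fun j => (continuous_apply j).continuousAt.eventually_ne (hX j)
  have hanalytic : ∀ᶠ Y in 𝓝 X, AnalyticAt ℂ f (ι Y) :=
    (hasFDerivAt_pi_inv hX).continuousAt.eventually hf.eventually_analyticAt
  filter_upwards [htorus, hanalytic] with Y hY hfY
  exact eulerOpFun_comp_inv i hY hfY.differentiableAt

end

theorem pA_eq_neg_X_mul_ellA_general {m : ℕ} (a : ℂ) (b c : Fin m → ℂ)
    (V : Set (Fin m → ℂ)) (hV : ∀ X ∈ V, ∀ i, X i ≠ 0)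
    (u : (Fin m → ℂ) → ℂ)
    (hu : AnalyticOnNhd ℂ u ((fun X : Fin m → ℂ => fun j => (X j)⁻¹) '' V))
    (i : Fin m) (X : Fin m → ℂ) (hX : X ∈ V) :
    pAFun a b c i (u ∘ fun X : Fin m → ℂ => fun j => (X j)⁻¹) X =
      -X i * ellAFun a b c i u (fun j => (X j)⁻¹) := by
  have hX0 : ∀ j, X j ≠ 0 := hV X hX
  have huX : AnalyticAt ℂ u (ι X) := hu _ ⟨X, hX, rfl⟩
  set g := eulerOpFun i u + (c i - 1) • u
  set w := eulerOpFun i u + b i • u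
  have hθv := eulerOpFun_comp_inv_eventuallyEq i hX0 huX
  have hg : (c i - 1) • (u ∘ ι) - eulerOpFun i (u ∘ ι) =ᶠ[𝓝 X] g ∘ ι :=
    hθv.mono fun Y hY => by
      simp only [g, Pi.add_apply, Pi.sub_apply, Pi.smul_apply, Pi.neg_apply, Function.comp_apply,
        smul_eq_mul, hY]
      ring
  have hw : eulerOpFun i (u ∘ ι) - b i • (u ∘ ι) =ᶠ[𝓝 X] -(w ∘ ι) :=
    hθv.mono fun Y hY => by
      simp only [w, Pi.add_apply, Pi.sub_apply, Pi.smul_apply, Pi.neg_apply, Function.comp_apply,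
        smul_eq_mul, hY]
      ring
  have hgX : DifferentiableAt ℂ g (ι X) :=
    ((huX.eulerOpFun i).add (analyticAt_const.smul huX)).differentiableAt
  have hwX : DifferentiableAt ℂ w (ι X) :=
    ((huX.eulerOpFun i).add (analyticAt_const.smul huX)).differentiableAt
  simp only [pAFun, ellAFun, Pi.add_apply, Pi.sub_apply, Pi.smul_apply, Finset.sum_apply,
    smul_eq_mul, eulerOpFun_congr _ hg, eulerOpFun_congr _ hw, eulerOpFun_neg, Pi.neg_apply,
    eulerOpFun_comp_inv _ hX0 hgX, eulerOpFun_comp_inv _ hX0 hwX, hw.self_of_nhds,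
    Function.comp_apply]
  simp only [g, w, Pi.add_apply, Pi.smul_apply, smul_eq_mul]
  field_simp [hX0 i]
  ring

/-- Under the change of coordinates `X_i = 1/x_i`, the Lauricella `F_A` operator `ℓ_i^A`
transforms, up to left multiplication by the unit `−X_i`, into `p_i^A`: for `V` an open
subset of the torus `(ℂ∖{0})^m`, `u` analytic on `ι(V)` where `ι(X) = (1/X_1,…,1/X_m)`,
and `v = u ∘ ι`, one has `(p_i^A v)(X) = −X_i ⋅ (ℓ_i^A u)(ι(X))` for every `X ∈ V`. -/
theorem pA_eq_neg_X_mul_ellA {m : ℕ} (hm : 1 ≤ m) (a : ℂ) (b c : Fin m → ℂ)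
    (V : Set (Fin m → ℂ)) (hVopen : IsOpen V) (hV : ∀ X ∈ V, ∀ i, X i ≠ 0)
    (u : (Fin m → ℂ) → ℂ)
    (hu : AnalyticOnNhd ℂ u ((fun X : Fin m → ℂ => fun j => (X j)⁻¹) '' V))
    (i : Fin m) (X : Fin m → ℂ) (hX : X ∈ V) :
    pAFun a b c i (u ∘ fun X : Fin m → ℂ => fun j => (X j)⁻¹) X =
      -X i * ellAFun a b c i u (fun j => (X j)⁻¹) :=
  pA_eq_neg_X_mul_ellA_general a b c V hV u hu i X hX
end
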